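/- (Exponential moment bound, i.i.d. product version.) Let (X,Y) ∈ ℝ^{2k} × ℝ have joint density f_{XY} satisfying L(t) = ∫ f_{Y|X}(y|x)^t f_X(x) dμ(x,y) < ∞ for all t > 0 and K₁ < ∞, where K₁ = max{ sup_{t ∈ (0,1]} t²·(t L(t))'' , sup_{t > 1} t²·(Q̄^{1−t} L(t))'' } for a fixed Q̄ > 0. Let (𝐗,𝐘) ∈ ℝ^{2kn} × ℝⁿ be i.i.d. with n copies of f_{XY}, and set h̃(𝐘|𝐗) = −log f_{𝐘|𝐗}(𝐘|𝐗) and h(𝐘|𝐗) = E[h̃(𝐘|𝐗)]. Then for all μ ∈ ℝ, E[exp(μ(h̃(𝐘|𝐗) − h(𝐘|𝐗)))] ≤ exp(n(K₁+1)·r(−μ)). -/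

import Mathlib

open MeasureTheory ProbabilityTheory Filter Topology Real
open scoped ENNReal NNReal

noncomputable section

namespace CondInfo

/-- Marginal density of `X` obtained from the joint density `f` of `(X, Y)`. -/
def margX {k : ℕ} (f : ((Fin (2 * k) → ℝ) × ℝ) → ℝ) (x : Fin (2 * k) → ℝ) : ℝ :=
  ∫ y, f (x, y)

/-- Conditional density `f_{Y|X}(y|x) = f_{XY}(x,y) / f_X(x)`. -/
def condD {k : ℕ} (f : ((Fin (2 * k) → ℝ) × ℝ) → ℝ) (p : (Fin (2 * k) → ℝ) × ℝ) : ℝ :=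
  f p / margX f p.1

/-- `L(t) = ∫ f_{Y|X}(y|x)^t f_X(x) dμ(x,y)`. -/
def Lmom {k : ℕ} (f : ((Fin (2 * k) → ℝ) × ℝ) → ℝ) (t : ℝ) : ℝ :=
  (∫⁻ p, ENNReal.ofReal (condD f p ^ t * margX f p.1)).toReal

/-- The conditional differential entropy `h(Y|X) = −∫ f_{XY} log f_{Y|X}`. -/
def hYX {k : ℕ} (f : ((Fin (2 * k) → ℝ) × ℝ) → ℝ) : ℝ :=
  -∫ p, f p * Real.log (condD f p)

/-- The set whose supremum is the first term in the definition of `K₁`. -/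
def K1setA {k : ℕ} (f : ((Fin (2 * k) → ℝ) × ℝ) → ℝ) : Set ℝ :=
  (fun t => t ^ 2 * iteratedDeriv 2 (fun u => u * Lmom f u) t) '' Set.Ioc (0 : ℝ) 1

/-- The set whose supremum is the second term in the definition of `K₁`. -/
def K1setB {k : ℕ} (f : ((Fin (2 * k) → ℝ) × ℝ) → ℝ) (Q : ℝ) : Set ℝ :=
  (fun t => t ^ 2 * iteratedDeriv 2 (fun u => Q ^ (1 - u) * Lmom f u) t) '' Set.Ioi (1 : ℝ)

/-- `K₁ = max{ sup_{t∈(0,1]} t² (t L(t))'' , sup_{t>1} t² (Q̄^{1−t} L(t))'' }`. -/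
def K1 {k : ℕ} (f : ((Fin (2 * k) → ℝ) × ℝ) → ℝ) (Q : ℝ) : ℝ :=
  max (sSup (K1setA f)) (sSup (K1setB f Q))

/-- The rate function `r(u) = u − log(1+u)` for `u > −1`, `+∞` otherwise
(valued in `ℝ≥0∞`). -/
def rfun (u : ℝ) : ℝ≥0∞ :=
  if -1 < u then ENNReal.ofReal (u - Real.log (1 + u)) else ⊤

/-- `exp(c · e)` for `e ∈ ℝ≥0∞` (equal to `⊤` when `e = ⊤`). -/
def expRate (c : ℝ) (e : ℝ≥0∞) : ℝ≥0∞ :=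
  if e = ⊤ then ⊤ else ENNReal.ofReal (Real.exp (c * e.toReal))

end CondInfo

open CondInfo

/-!
Write `ℓ = −log f_{Y|X}(Y|X)` under the joint law, so that `L(t) = E[exp((1 − t) ℓ)] = M(1 − t)`
with `M` the moment generating function of `ℓ`; finiteness of `L` on `(0, ∞)` makes `M` analytic
on `(−∞, 1)`. If `s² g''(s) ≤ K` between `t` and `1`, then `K (s − 1 − log s) − g(s)` is convex
there and lies above its tangent at `1`, i.e. `g(t) ≤ g(1) + (t − 1) g'(1) + K (t − 1 − log t)`.
Applied to `t L(t)` for `t ≤ 1` and to `Q̄^{1−t} L(t)` (the mgf of `ℓ + log Q̄` at `1 − t`) for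
`t > 1`, and combined with `log x ≤ x − 1`, this gives
`log L(t) + (t − 1) E ℓ ≤ (K₁ + 1)(t − 1 − log t)`, the one-letter bound at `t = 1 − μ`.
The `n`-letter bound is its `n`-th power, the coordinates being independent.
-/

open Set

theorem ConvexOn.add_mul_sub_le_of_hasDerivAt {S : Set ℝ} {ψ : ℝ → ℝ} {x y ψ' : ℝ}
    (hψ : ConvexOn ℝ S ψ) (hx : x ∈ S) (hy : y ∈ S) (hd : HasDerivAt ψ ψ' x) :
    ψ x + ψ' * (y - x) ≤ ψ y := by
  rcases lt_trichotomy x y with hxy | rfl | hyx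
  · have := hψ.le_slope_of_hasDerivAt hx hy hxy hd
    rw [slope_def_field, le_div_iff₀ (sub_pos.2 hxy)] at this
    linarith
  · simp
  · have := hψ.slope_le_of_hasDerivAt hy hx hyx hd
    rw [slope_def_field, div_le_iff₀ (sub_pos.2 hyx)] at this
    linarith

theorem le_add_mul_deriv_add_mul_sub_log {g : ℝ → ℝ} {K t : ℝ} (ht : 0 < t)
    (hg : ∀ s ∈ uIcc t 1, DifferentiableAt ℝ g s)
    (hg' : ∀ s ∈ uIoo t 1, DifferentiableAt ℝ (deriv g) s)
    (hK : ∀ s ∈ uIoo t 1, s ^ 2 * iteratedDeriv 2 g s ≤ K) :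
    g t ≤ g 1 + (t - 1) * deriv g 1 + K * (t - 1 - log t) := by
  have hpos : ∀ s ∈ uIcc t 1, 0 < s := fun s hs => lt_of_lt_of_le (lt_min ht one_pos) hs.1
  have hint : interior (uIcc t 1) = uIoo t 1 := interior_Icc
  have hd : ∀ s ∈ uIcc t 1, HasDerivAt (fun s => K * (s - 1 - log s) - g s)
      (K * (1 - s⁻¹) - deriv g s) s := fun s hs =>
    ((((hasDerivAt_id s).sub_const 1).sub (hasDerivAt_log (hpos s hs).ne')).const_mul K).sub
      (hg s hs).hasDerivAt
  have hd2 : ∀ s ∈ uIoo t 1, HasDerivAt (fun s => K * (1 - s⁻¹) - deriv g s)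
      (K / s ^ 2 - iteratedDeriv 2 g s) s := by
    intro s hs
    have h := (((hasDerivAt_inv (hpos s (Ioo_subset_Icc_self hs)).ne').const_sub 1).const_mul
      K).sub (hg' s hs).hasDerivAt
    rw [iteratedDeriv_succ, iteratedDeriv_one]
    exact h.congr_deriv (by rw [neg_neg, div_eq_mul_inv])
  have hconv : ConvexOn ℝ (uIcc t 1) (fun s => K * (s - 1 - log s) - g s) := by
    refine convexOn_of_hasDerivWithinAt2_nonneg (convex_uIcc t 1)
      (fun s hs => (hd s hs).continuousAt.continuousWithinAt)
      (fun s hs => (hd s (interior_subset hs)).hasDerivWithinAt)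
      (fun s hs => (hd2 s (hint ▸ hs)).hasDerivWithinAt) (fun s hs => ?_)
    rw [hint] at hs
    have hs2 : 0 < s ^ 2 := pow_pos (hpos s (Ioo_subset_Icc_self hs)) 2
    rw [sub_nonneg, le_div_iff₀ hs2, mul_comm]
    exact hK s hs
  have := hconv.add_mul_sub_le_of_hasDerivAt right_mem_uIcc left_mem_uIcc
    (hd 1 right_mem_uIcc)
  simp only [log_one, inv_one, sub_self, mul_zero, zero_sub] at this
  linarith

theorem le_add_mul_deriv_add_mul_sub_log_of_analyticOnNhd {g : ℝ → ℝ} {K t : ℝ}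
    (hg : AnalyticOnNhd ℝ g (Ioi 0)) (ht : 0 < t)
    (hK : ∀ s ∈ uIoo t 1, s ^ 2 * iteratedDeriv 2 g s ≤ K) :
    g t ≤ g 1 + (t - 1) * deriv g 1 + K * (t - 1 - log t) :=
  have hpos : ∀ s ∈ uIcc t 1, s ∈ Ioi 0 := fun _ hs => (lt_min ht one_pos).trans_le hs.1
  le_add_mul_deriv_add_mul_sub_log ht (fun s hs => (hg s (hpos s hs)).differentiableAt)
    (fun s hs => (hg s (hpos s (Ioo_subset_Icc_self hs))).deriv.differentiableAt) hK

section MGF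

variable {Ω : Type*} [MeasurableSpace Ω] {ν : Measure Ω} {X : Ω → ℝ} {K t : ℝ}

theorem one_sub_mem_interior_integrableExpSet (hX : Iio 1 ⊆ integrableExpSet X ν) (ht : 0 < t) :
    1 - t ∈ interior (integrableExpSet X ν) :=
  interior_mono hX (by rw [interior_Iio]; simpa using ht)

theorem analyticOnNhd_mgf_one_sub (hX : Iio 1 ⊆ integrableExpSet X ν) :
    AnalyticOnNhd ℝ (fun u => mgf X ν (1 - u)) (Ioi 0) := fun _ ht =>
  (analyticAt_mgf (one_sub_mem_interior_integrableExpSet hX ht)).comp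
    (analyticAt_const.sub analyticAt_id)

theorem hasDerivAt_mgf_one_sub_one (hX : Iio 1 ⊆ integrableExpSet X ν) :
    HasDerivAt (fun u => mgf X ν (1 - u)) (-ν[X]) 1 := by
  have h0 : 0 ∈ interior (integrableExpSet X ν) := by
    simpa using one_sub_mem_interior_integrableExpSet hX one_pos
  have h : HasDerivAt (mgf X ν) ν[X] (1 - 1) := by
    rw [sub_self, ← deriv_mgf_zero h0]
    exact (differentiableAt_mgf h0).hasDerivAt
  have h' := h.comp 1 ((hasDerivAt_id' 1).const_sub 1)
  rwa [mul_neg_one] at h'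

theorem mgf_one_sub_le [IsProbabilityMeasure ν] (hX : Iio 1 ⊆ integrableExpSet X ν) (ht : 0 < t)
    (hK : ∀ s ∈ uIoo t 1, s ^ 2 * iteratedDeriv 2 (fun u => mgf X ν (1 - u)) s ≤ K) :
    mgf X ν (1 - t) ≤ 1 - (t - 1) * ν[X] + K * (t - 1 - log t) := by
  have h := le_add_mul_deriv_add_mul_sub_log_of_analyticOnNhd (analyticOnNhd_mgf_one_sub hX) ht hK
  rw [(hasDerivAt_mgf_one_sub_one hX).deriv, sub_self, mgf_zero] at h
  linarith

theorem mul_mgf_one_sub_le [IsProbabilityMeasure ν] (hX : Iio 1 ⊆ integrableExpSet X ν)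
    (ht : 0 < t)
    (hK : ∀ s ∈ uIoo t 1, s ^ 2 * iteratedDeriv 2 (fun u => u * mgf X ν (1 - u)) s ≤ K) :
    t * mgf X ν (1 - t) ≤ 1 + (t - 1) * (1 - ν[X]) + K * (t - 1 - log t) := by
  have h := le_add_mul_deriv_add_mul_sub_log_of_analyticOnNhd
    (analyticOnNhd_id.mul (analyticOnNhd_mgf_one_sub hX)) ht hK
  have hd : HasDerivAt (fun u => u * mgf X ν (1 - u)) (1 * mgf X ν (1 - 1) + 1 * -ν[X]) 1 :=
    (hasDerivAt_id' 1).mul (hasDerivAt_mgf_one_sub_one hX)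
  rw [hd.deriv, sub_self, mgf_zero] at h
  linarith

theorem integrable_of_Iio_one_subset_integrableExpSet (hX : Iio 1 ⊆ integrableExpSet X ν) :
    Integrable X ν :=
  integrable_of_mem_interior_integrableExpSet (by
    simpa using one_sub_mem_interior_integrableExpSet hX one_pos)

theorem log_mgf_one_sub_add_le_of_le_one [IsProbabilityMeasure ν]
    (hX : Iio 1 ⊆ integrableExpSet X ν) (ht : 0 < t) (ht1 : t ≤ 1)
    (hK : ∀ s ∈ Ioc 0 1, s ^ 2 * iteratedDeriv 2 (fun u => u * mgf X ν (1 - u)) s ≤ K) :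
    log (mgf X ν (1 - t)) + (t - 1) * ν[X] ≤ (K + 1) * (t - 1 - log t) := by
  have hM := mul_mgf_one_sub_le hX ht fun s hs => by
    rw [uIoo_of_le ht1] at hs
    exact hK s ⟨ht.trans hs.1, hs.2.le⟩
  have hMpos : 0 < mgf X ν (1 - t) := mgf_pos (hX (by simpa using ht))
  have hlog := log_le_sub_one_of_pos (mul_pos ht hMpos)
  rw [log_mul ht.ne' hMpos.ne'] at hlog
  linarith

theorem log_mgf_one_sub_add_le_of_one_lt [IsProbabilityMeasure ν]
    (hX : Iio 1 ⊆ integrableExpSet X ν) {Q : ℝ} (hQ : 0 < Q) (ht : 1 < t)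
    (hK : ∀ s ∈ Ioi 1, s ^ 2 * iteratedDeriv 2 (fun u => Q ^ (1 - u) * mgf X ν (1 - u)) s ≤ K) :
    log (mgf X ν (1 - t)) + (t - 1) * ν[X] ≤ K * (t - 1 - log t) := by
  set Y : Ω → ℝ := fun ω => X ω + log Q
  have hY : Iio 1 ⊆ integrableExpSet Y ν := fun c hc => by
    refine ((hX hc).mul_const (exp (c * log Q))).congr (ae_of_all _ fun ω => ?_)
    simp only [Y, ← exp_add]
    ring_nf
  have hQY : (fun u => Q ^ (1 - u) * mgf X ν (1 - u)) = fun u => mgf Y ν (1 - u) := by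
    ext u
    rw [mgf_add_const, rpow_def_of_pos hQ, mul_comm, mul_comm (log Q)]
  have hM := mgf_one_sub_le hY (one_pos.trans ht) fun s hs => by
    rw [uIoo_of_ge ht.le] at hs
    exact hQY ▸ hK s hs.1
  have hYmean : ν[Y] = ν[X] + log Q := by
    rw [integral_add (integrable_of_Iio_one_subset_integrableExpSet hX) (integrable_const _),
      integral_const, probReal_univ, one_smul]
  have hMpos : 0 < mgf X ν (1 - t) := mgf_pos (hX (by simp; linarith))
  have hlog := log_le_sub_one_of_pos (mul_pos hMpos (exp_pos ((1 - t) * log Q)))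
  rw [log_mul hMpos.ne' (exp_pos _).ne', log_exp, ← mgf_add_const] at hlog
  rw [hYmean] at hM
  linarith

theorem log_mgf_one_sub_add_le [IsProbabilityMeasure ν]
    (hX : Iio 1 ⊆ integrableExpSet X ν) {Q : ℝ} (hQ : 0 < Q)
    (hKA : ∀ s ∈ Ioc 0 1, s ^ 2 * iteratedDeriv 2 (fun u => u * mgf X ν (1 - u)) s ≤ K)
    (hKB : ∀ s ∈ Ioi 1, s ^ 2 * iteratedDeriv 2 (fun u => Q ^ (1 - u) * mgf X ν (1 - u)) s ≤ K)
    (ht : 0 < t) :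
    log (mgf X ν (1 - t)) + (t - 1) * ν[X] ≤ (K + 1) * (t - 1 - log t) := by
  rcases le_or_gt t 1 with ht1 | ht1
  · exact log_mgf_one_sub_add_le_of_le_one hX ht ht1 hKA
  · have := log_mgf_one_sub_add_le_of_one_lt hX hQ ht1 hKB
    have := log_le_sub_one_of_pos ht
    nlinarith

theorem lintegral_exp_mul_sub_integral_le [IsProbabilityMeasure ν]
    (hX : Iio 1 ⊆ integrableExpSet X ν) {Q : ℝ} (hQ : 0 < Q)
    (hKA : ∀ s ∈ Ioc 0 1, s ^ 2 * iteratedDeriv 2 (fun u => u * mgf X ν (1 - u)) s ≤ K)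
    (hKB : ∀ s ∈ Ioi 1, s ^ 2 * iteratedDeriv 2 (fun u => Q ^ (1 - u) * mgf X ν (1 - u)) s ≤ K)
    {μ : ℝ} (hμ : μ < 1) :
    ∫⁻ x, ENNReal.ofReal (exp (μ * (X x - ν[X]))) ∂ν
      ≤ ENNReal.ofReal (exp ((K + 1) * (-μ - log (1 - μ)))) := by
  have hmgf : ∫ x, exp (μ * (X x - ν[X])) ∂ν = exp (-μ * ν[X] + log (mgf X ν μ)) := by
    rw [exp_add, exp_log (mgf_pos (hX hμ)), mul_comm, neg_mul, ← mul_neg, ← mgf_add_const, mgf]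
    simp only [sub_eq_add_neg]
  have hint : Integrable (fun x => exp (μ * (X x - ν[X]))) ν := by
    refine ((hX hμ).mul_const (exp (-μ * ν[X]))).congr (ae_of_all _ fun x => ?_)
    simp only [← exp_add]
    ring_nf
  rw [← ofReal_integral_eq_lintegral_ofReal hint (ae_of_all _ fun _ => (exp_pos _).le), hmgf]
  refine ENNReal.ofReal_le_ofReal (exp_le_exp.2 ?_)
  have := log_mgf_one_sub_add_le hX hQ hKA hKB (show 0 < 1 - μ by linarith)
  rw [sub_sub_cancel] at this
  linarith

end MGF

section Pi

variable {α ι : Type*} [MeasurableSpace α] [Fintype ι] {ν : Measure α} [IsProbabilityMeasure ν]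

theorem lintegral_pi_prod_comp_eval {g : α → ℝ≥0∞} (hg : Measurable g) :
    ∫⁻ ω, ∏ i, g (ω i) ∂Measure.pi (fun _ : ι => ν) = (∫⁻ x, g x ∂ν) ^ Fintype.card ι := by
  rw [lintegral_prod_eq_prod_lintegral_of_indepFun _ _
    (iIndepFun_pi (X := fun _ => g) fun _ => hg.aemeasurable)
    fun i => hg.comp (measurable_pi_apply i)]
  simp_rw [(measurePreserving_eval (fun _ : ι => ν) _).lintegral_comp hg]
  rw [Finset.prod_const, Finset.card_univ]

theorem integral_pi_sum_comp_eval {X : α → ℝ} (hX : Integrable X ν) :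
    ∫ ω, ∑ i, X (ω i) ∂Measure.pi (fun _ : ι => ν) = Fintype.card ι * ν[X] := by
  rw [integral_finsetSum _ fun i _ => integrable_comp_eval hX]
  simp_rw [integral_comp_eval (μ := fun _ : ι => ν) hX.aestronglyMeasurable]
  rw [Finset.sum_const, Finset.card_univ, nsmul_eq_mul]

theorem lintegral_pi_exp_mul_sum_sub_integral {X : α → ℝ} (hXm : Measurable X)
    (hX : Integrable X ν) (μ : ℝ) :
    ∫⁻ ω, ENNReal.ofReal (exp (μ * (∑ i, X (ω i) -
        ∫ ω', ∑ i, X (ω' i) ∂Measure.pi (fun _ : ι => ν)))) ∂Measure.pi (fun _ : ι => ν)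
      = (∫⁻ x, ENNReal.ofReal (exp (μ * (X x - ν[X]))) ∂ν) ^ Fintype.card ι := by
  rw [integral_pi_sum_comp_eval hX, ← lintegral_pi_prod_comp_eval (by fun_prop)]
  congr 1 with ω
  rw [← ENNReal.ofReal_prod_of_nonneg fun _ _ => (exp_pos _).le, ← exp_sum, ← Finset.mul_sum,
    Finset.sum_sub_distrib, Finset.sum_const, Finset.card_univ, nsmul_eq_mul]

end Pi

namespace CondInfo

variable {k : ℕ} {f : ((Fin (2 * k) → ℝ) × ℝ) → ℝ}

structure IsJointDensity (f : ((Fin (2 * k) → ℝ) × ℝ) → ℝ) : Prop where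
  measurable : Measurable f
  nonneg : ∀ p, 0 ≤ f p
  lintegral_eq_one : ∫⁻ p, ENNReal.ofReal (f p) = 1

def jointLaw (f : ((Fin (2 * k) → ℝ) × ℝ) → ℝ) : Measure ((Fin (2 * k) → ℝ) × ℝ) :=
  volume.withDensity fun p => ENNReal.ofReal (f p)

/-- The one-letter conditional information `h̃(Y|X) = −log f_{Y|X}(Y|X)`. -/
def condInfoDensity (f : ((Fin (2 * k) → ℝ) × ℝ) → ℝ) (p : (Fin (2 * k) → ℝ) × ℝ) : ℝ :=
  -log (condD f p)

theorem isProbabilityMeasure_jointLaw (hint : ∫⁻ p, ENNReal.ofReal (f p) = 1) :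
    IsProbabilityMeasure (jointLaw f) :=
  ⟨by rw [jointLaw, withDensity_apply _ MeasurableSet.univ, Measure.restrict_univ, hint]⟩

theorem measurable_margX (hmeas : Measurable f) : Measurable (margX f) :=
  hmeas.stronglyMeasurable.integral_prod_right'.measurable

theorem measurable_condInfoDensity (hmeas : Measurable f) : Measurable (condInfoDensity f) :=
  (hmeas.div ((measurable_margX hmeas).comp measurable_fst)).log.neg

namespace IsJointDensity

theorem ae_ofReal_margX_eq_lintegral (hf : IsJointDensity f) :
    ∀ᵐ x, ENNReal.ofReal (margX f x) = ∫⁻ y, ENNReal.ofReal (f (x, y)) := by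
  have hfin : ∫⁻ x, ∫⁻ y, ENNReal.ofReal (f (x, y)) ≠ ⊤ := by
    rw [← lintegral_prod _ hf.measurable.ennreal_ofReal.aemeasurable, ← Measure.volume_eq_prod,
      hf.lintegral_eq_one]
    exact ENNReal.one_ne_top
  filter_upwards [ae_lt_top hf.measurable.ennreal_ofReal.lintegral_prod_right' hfin] with x hx
  rw [margX, integral_eq_lintegral_of_nonneg_ae (ae_of_all _ fun y => hf.nonneg (x, y))
    (hf.measurable.comp measurable_prodMk_left).aestronglyMeasurable, ENNReal.ofReal_toReal hx.ne]

theorem ae_margX_pos (hf : IsJointDensity f) : ∀ᵐ p ∂jointLaw f, 0 < margX f p.1 := by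
  set S := {x | margX f x ≤ 0}
  have hS : MeasurableSet S := measurable_margX hf.measurable measurableSet_Iic
  have hpre : {p : (Fin (2 * k) → ℝ) × ℝ | ¬ 0 < margX f p.1} = S ×ˢ univ := by
    ext p; simp [S]
  rw [ae_iff, hpre, jointLaw, withDensity_apply _ (hS.prod MeasurableSet.univ),
    Measure.volume_eq_prod, setLIntegral_prod _ hf.measurable.ennreal_ofReal.aemeasurable]
  simp only [Measure.restrict_univ]
  calc ∫⁻ x in S, ∫⁻ y, ENNReal.ofReal (f (x, y))
      = ∫⁻ x in S, ENNReal.ofReal (margX f x) :=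
        lintegral_congr_ae (ae_restrict_of_ae
          (hf.ae_ofReal_margX_eq_lintegral.mono fun _ h => h.symm))
    _ = 0 := setLIntegral_eq_zero hS fun x hx => ENNReal.ofReal_eq_zero.2 hx

theorem lintegral_condD_rpow_mul_margX (hf : IsJointDensity f) {t : ℝ} (ht : 0 < t) :
    ∫⁻ p, ENNReal.ofReal (condD f p ^ t * margX f p.1)
      = ∫⁻ p, ENNReal.ofReal (exp ((1 - t) * condInfoDensity f p)) ∂jointLaw f := by
  rw [jointLaw, lintegral_withDensity_eq_lintegral_mul _ hf.measurable.ennreal_ofReal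
    ((measurable_condInfoDensity hf.measurable).const_mul _).exp.ennreal_ofReal]
  have hmarg := (ae_withDensity_iff hf.measurable.ennreal_ofReal).1 hf.ae_margX_pos
  refine lintegral_congr_ae (hmarg.mono fun p hp => ?_)
  rcases (hf.nonneg p).eq_or_lt with hfp | hfp
  · simp [condD, ← hfp, zero_rpow ht.ne']
  have hm : 0 < margX f p.1 := hp (by simpa using hfp)
  have hc : 0 < condD f p := div_pos hfp hm
  have hexp : exp ((1 - t) * condInfoDensity f p) = condD f p ^ t / condD f p := by
    rw [condInfoDensity, mul_neg, ← neg_mul, neg_sub, mul_comm, ← rpow_def_of_pos hc,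
      rpow_sub_one hc.ne']
  have hfc : f p / condD f p = margX f p.1 := by rw [condD]; field_simp
  rw [Pi.mul_apply, ← ENNReal.ofReal_mul hfp.le, hexp]
  dsimp only
  rw [← hfc]
  ring_nf

theorem Iio_one_subset_integrableExpSet (hf : IsJointDensity f)
    (hL : ∀ t : ℝ, 0 < t → ∫⁻ p, ENNReal.ofReal (condD f p ^ t * margX f p.1) < ⊤) :
    Iio 1 ⊆ integrableExpSet (condInfoDensity f) (jointLaw f) := fun c hc => by
  have h := hL (1 - c) (by simpa using hc)
  rw [hf.lintegral_condD_rpow_mul_margX (by simpa using hc), sub_sub_cancel] at h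
  refine ⟨((measurable_condInfoDensity hf.measurable).const_mul c).exp.aestronglyMeasurable, ?_⟩
  rwa [hasFiniteIntegral_iff_ofReal (ae_of_all _ fun _ => (exp_pos _).le)]

theorem Lmom_eq_mgf (hf : IsJointDensity f)
    (hL : ∀ t : ℝ, 0 < t → ∫⁻ p, ENNReal.ofReal (condD f p ^ t * margX f p.1) < ⊤)
    {t : ℝ} (ht : 0 < t) :
    Lmom f t = mgf (condInfoDensity f) (jointLaw f) (1 - t) := by
  rw [Lmom, hf.lintegral_condD_rpow_mul_margX ht, mgf,
    ← ofReal_integral_eq_lintegral_ofReal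
      (hf.Iio_one_subset_integrableExpSet hL (by simpa using ht))
      (ae_of_all _ fun _ => (exp_pos _).le),
    ENNReal.toReal_ofReal (integral_nonneg fun _ => (exp_pos _).le)]

theorem iteratedDeriv_two_mul_Lmom (hf : IsJointDensity f)
    (hL : ∀ t : ℝ, 0 < t → ∫⁻ p, ENNReal.ofReal (condD f p ^ t * margX f p.1) < ⊤)
    (w : ℝ → ℝ) {s : ℝ} (hs : 0 < s) :
    iteratedDeriv 2 (fun u => w u * Lmom f u) s
      = iteratedDeriv 2 (fun u => w u * mgf (condInfoDensity f) (jointLaw f) (1 - u)) s :=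
  Filter.EventuallyEq.iteratedDeriv_eq 2 <| Filter.mem_of_superset (Ioi_mem_nhds hs) fun u hu => by
    show w u * Lmom f u = w u * _
    rw [hf.Lmom_eq_mgf hL hu]

theorem sq_mul_iteratedDeriv_two_mul_mgf_le_K1 (hf : IsJointDensity f)
    (hL : ∀ t : ℝ, 0 < t → ∫⁻ p, ENNReal.ofReal (condD f p ^ t * margX f p.1) < ⊤)
    {Q : ℝ} (hK : BddAbove (K1setA f)) :
    ∀ s ∈ Ioc 0 1, s ^ 2 * iteratedDeriv 2
      (fun u => u * mgf (condInfoDensity f) (jointLaw f) (1 - u)) s ≤ K1 f Q := fun s hs => by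
  rw [← hf.iteratedDeriv_two_mul_Lmom hL (fun u => u) hs.1]
  exact (le_csSup hK ⟨s, hs, rfl⟩).trans (le_max_left _ _)

theorem sq_mul_iteratedDeriv_two_rpow_mul_mgf_le_K1 (hf : IsJointDensity f)
    (hL : ∀ t : ℝ, 0 < t → ∫⁻ p, ENNReal.ofReal (condD f p ^ t * margX f p.1) < ⊤)
    {Q : ℝ} (hK : BddAbove (K1setB f Q)) :
    ∀ s ∈ Ioi 1, s ^ 2 * iteratedDeriv 2
      (fun u => Q ^ (1 - u) * mgf (condInfoDensity f) (jointLaw f) (1 - u)) s ≤ K1 f Q :=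
  fun s hs => by
  rw [← hf.iteratedDeriv_two_mul_Lmom hL (fun u => Q ^ (1 - u)) (one_pos.trans hs)]
  exact (le_csSup hK ⟨s, hs, rfl⟩).trans (le_max_right _ _)

end IsJointDensity

theorem expRate_rfun_neg_of_one_le {c μ : ℝ} (hμ : 1 ≤ μ) : expRate c (rfun (-μ)) = ⊤ := by
  rw [rfun, if_neg (by linarith), expRate, if_pos rfl]

theorem expRate_rfun_neg_of_lt_one {c μ : ℝ} (hμ : μ < 1) :
    expRate c (rfun (-μ)) = ENNReal.ofReal (exp (c * (-μ - log (1 - μ)))) := by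
  have hr : 0 ≤ -μ - log (1 - μ) := by linarith [log_le_sub_one_of_pos (by linarith : 0 < 1 - μ)]
  rw [rfun, if_pos (by linarith), expRate, if_neg ENNReal.ofReal_ne_top, ← sub_eq_add_neg,
    ENNReal.toReal_ofReal hr]

end CondInfo

/-- **Exponential moment bound, i.i.d. product version** (Corollary 1). -/
theorem exp_moment_conditional_information_iid
    (k n : ℕ) (f : ((Fin (2 * k) → ℝ) × ℝ) → ℝ)
    (hmeas : Measurable f) (hpos : ∀ p, 0 ≤ f p)
    (hint : ∫⁻ p, ENNReal.ofReal (f p) = 1)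
    -- `L(t) < ∞` for all `t > 0`
    (hL : ∀ t : ℝ, 0 < t → ∫⁻ p, ENNReal.ofReal (condD f p ^ t * margX f p.1) < ⊤)
    (Q : ℝ) (hQ : 0 < Q)
    -- `K₁ < ∞`
    (hK : BddAbove (K1setA f) ∧ BddAbove (K1setB f Q)) :
    ∀ μ : ℝ,
      ∫⁻ ω : Fin n → ((Fin (2 * k) → ℝ) × ℝ),
          ENNReal.ofReal (Real.exp (μ * ((∑ i, -Real.log (condD f (ω i))) -
            (∫ ω' : Fin n → ((Fin (2 * k) → ℝ) × ℝ),
                (∑ i, -Real.log (condD f (ω' i)))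
              ∂(Measure.pi fun _ => volume.withDensity fun p => ENNReal.ofReal (f p))))))
          ∂(Measure.pi fun _ => volume.withDensity fun p => ENNReal.ofReal (f p))
        ≤ expRate ((n : ℝ) * (K1 f Q + 1)) (rfun (-μ)) := by
  intro μ
  rcases le_or_gt 1 μ with hμ | hμ
  · rw [expRate_rfun_neg_of_one_le hμ]
    exact le_top
  have hf : IsJointDensity f := ⟨hmeas, hpos, hint⟩
  have := isProbabilityMeasure_jointLaw hint
  have hX := hf.Iio_one_subset_integrableExpSet hL
  have hmom := lintegral_exp_mul_sub_integral_le hX hQ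
    (hf.sq_mul_iteratedDeriv_two_mul_mgf_le_K1 hL hK.1)
    (hf.sq_mul_iteratedDeriv_two_rpow_mul_mgf_le_K1 hL hK.2) hμ
  have hpi := lintegral_pi_exp_mul_sum_sub_integral (ι := Fin n)
    (measurable_condInfoDensity hmeas) (integrable_of_Iio_one_subset_integrableExpSet hX) μ
  rw [Fintype.card_fin] at hpi
  rw [expRate_rfun_neg_of_lt_one hμ, mul_assoc, exp_nat_mul, ENNReal.ofReal_pow (exp_pos _).le]
  exact hpi.trans_le (pow_le_pow_left₀ zero_le hmom n)
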